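/- Let M₁, M₂, N₁, N₂ be positive integers with N := N₁·N₂ = M₁·M₂, and let F : Matrix (Fin N₁ × Fin N₂) (Fin M₁ × Fin M₂) ℂ be the quantum Fourier transform, F (j,k) (l,m) = exp(2πi·(j·N₂ + k)·(l·M₂ + m)/N)/√N. For each pair (s,t) with s < min(M₁, N₂) and t < min(N₁, M₂), let C(s,t) := {(x,y) : x < N₂, y < M₂, x ≡ s (mod M₁), y ≡ t (mod N₁)} (a nonempty finite set), let λ(s,t) := √(N₁·M₁·|C(s,t)|/N), let A(s,t) : Matrix (Fin N₁) (Fin M₁) ℂ have entries A(s,t) j l = exp(2πi·(N₂·M₂·j·l + M₂·l·s + N₂·j·t)/N)/√(N₁·M₁), and let B(s,t) : Matrix (Fin N₂) (Fin M₂) ℂ have entries B(s,t) x y = exp(2πi·x·y/N)/√|C(s,t)| if (x,y) ∈ C(s,t) and 0 otherwise. Then: (i) F (j,k) (l,m) = Σ_{(s,t)} λ(s,t) · A(s,t) j l · B(s,t) k m for all j,k,l,m, where the sum is over all such pairs (s,t); (ii) the family {A(s,t)} is orthonormal: trace((A(s,t))ᴴ * A(s',t')) = 1 if (s,t) = (s',t')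 and 0 otherwise; and (iii) the family {B(s,t)} is orthonormal: trace((B(s,t))ᴴ * B(s',t')) = 1 if (s,t) = (s',t') and 0 otherwise. In particular this is a generalized operator-Schmidt decomposition of F with Schmidt coefficients λ(s,t). -/

import Mathlib

open Matrix Complex

/-- The quantum Fourier transform `𝓕_{M₁M₂ → N₁N₂}` as a matrix, with `N = N₁N₂ = M₁M₂`. -/
noncomputable def QFT (M₁ M₂ N₁ N₂ : ℕ) : Matrix (Fin N₁ × Fin N₂) (Fin M₁ × Fin M₂) ℂ :=
  fun p q => Complex.exp (2 * Real.pi * Complex.I *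
      (((p.1.val : ℂ) * N₂ + p.2.val) * ((q.1.val : ℂ) * M₂ + q.2.val)) / (N₁ * N₂)) /
    Real.sqrt (N₁ * N₂)

/-- The equivalence class `C(s,t) = {(x,y) | x ≡ s (mod M₁), y ≡ t (mod N₁)}`. -/
def QFTclass (M₁ M₂ N₁ N₂ : ℕ) (s : Fin (min M₁ N₂)) (t : Fin (min N₁ M₂)) :
    Finset (Fin N₂ × Fin M₂) :=
  Finset.univ.filter fun xy => xy.1.val % M₁ = s.val ∧ xy.2.val % N₁ = t.val

/-- The Schmidt coefficient `λ(s,t) = √(N₁M₁|C(s,t)|/N)`. -/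
noncomputable def QFTlam (M₁ M₂ N₁ N₂ : ℕ) (s : Fin (min M₁ N₂)) (t : Fin (min N₁ M₂)) :
    ℝ :=
  Real.sqrt ((N₁ * M₁ * (QFTclass M₁ M₂ N₁ N₂ s t).card : ℝ) / (N₁ * N₂))

/-- The Alice-side Schmidt matrices `A(s,t)`. -/
noncomputable def QFTA (M₁ M₂ N₁ N₂ : ℕ) (s : Fin (min M₁ N₂)) (t : Fin (min N₁ M₂)) :
    Matrix (Fin N₁) (Fin M₁) ℂ :=
  fun j l => Complex.exp (2 * Real.pi * Complex.I *
      ((N₂ : ℂ) * M₂ * j.val * l.val + (M₂ : ℂ) * l.val * s.val + (N₂ : ℂ) * j.val * t.val) /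
      (N₁ * N₂)) / Real.sqrt (N₁ * M₁)

/-- The Bob-side Schmidt matrices `B(s,t)`, supported on the class `C(s,t)`. -/
noncomputable def QFTB (M₁ M₂ N₁ N₂ : ℕ) (s : Fin (min M₁ N₂)) (t : Fin (min N₁ M₂)) :
    Matrix (Fin N₂) (Fin M₂) ℂ :=
  fun x y =>
    if (x, y) ∈ QFTclass M₁ M₂ N₁ N₂ s t then
      Complex.exp (2 * Real.pi * Complex.I * ((x.val : ℂ) * y.val) / (N₁ * N₂)) /
        Real.sqrt ((QFTclass M₁ M₂ N₁ N₂ s t).card)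
    else 0

/-! Write `k = M₁ a + s` and `m = N₁ b + t` with `s = k mod M₁`, `t = m mod N₁`. Because
`N₁ N₂ = M₁ M₂`, the phase of the Fourier matrix satisfies
`(j N₂ + k)(l M₂ + m) ≡ N₂ M₂ j l + M₂ l s + N₂ j t + k m  (mod N₁ N₂)`,
which is the phase of `A(s,t) j l` times that of `B(s,t) k m`; and `(k, m)` lies in exactly
one class `C(s,t)`, so only that term of the sum survives. Orthonormality of the `A(s,t)` is
the orthogonality of characters of `ℤ/M₁` and `ℤ/N₁`; that of the `B(s,t)` comes from the
classes being disjoint. -/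

open scoped Real ComplexConjugate

theorem Matrix.trace_conjTranspose_mul_eq_sum {m n α : Type*} [Fintype m] [Fintype n]
    [NonUnitalNonAssocSemiring α] [Star α] (A B : Matrix m n α) :
    (Aᴴ * B).trace = ∑ i, ∑ j, star (A i j) * B i j := by
  rw [trace, Finset.sum_comm]
  simp [mul_apply]

theorem sum_exp_two_pi_I_mul_div_eq_ite {n : ℕ} (hn : n ≠ 0) (d : ℤ) :
    ∑ l : Fin n, exp (2 * π * I * (l * d) / n) = if (n : ℤ) ∣ d then (n : ℂ) else 0 := by
  have hζ := Complex.isPrimitiveRoot_exp n hn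
  have hpow : ∀ l : ℕ, exp (2 * π * I * (l * d) / n) = (exp (2 * π * I / n) ^ d) ^ l := by
    intro l
    rw [← exp_int_mul, ← exp_nat_mul]
    ring_nf
  simp_rw [hpow, Fin.sum_univ_eq_sum_range (fun l => (exp (2 * π * I / n) ^ d) ^ l)]
  split_ifs with hd
  · simp [(hζ.zpow_eq_one_iff_dvd d).2 hd]
  · have hn_root : (exp (2 * π * I / n) ^ d) ^ n = 1 := by
      rw [← zpow_natCast, ← _root_.zpow_mul, mul_comm d, _root_.zpow_mul, zpow_natCast,
        hζ.pow_eq_one, _root_.one_zpow]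
    rw [geom_sum_eq ((hζ.zpow_eq_one_iff_dvd d).not.2 hd), hn_root, sub_self, zero_div]

theorem sum_exp_two_pi_I_mul_sub_div_eq_ite {n a b : ℕ} (ha : a < n) (hb : b < n) :
    ∑ l : Fin n, exp (2 * π * I * (l * ((b : ℂ) - a)) / n) = if a = b then (n : ℂ) else 0 := by
  have h := sum_exp_two_pi_I_mul_div_eq_ite (by omega : n ≠ 0) ((b : ℤ) - a)
  push_cast at h
  rw [h]
  refine if_congr (Nat.modEq_iff_dvd.symm.trans ⟨fun hab => hab.eq_of_lt_of_lt ha hb, ?_⟩) rfl rfl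
  rintro rfl
  rfl

theorem conj_exp_mul_exp {x y : ℂ} (hx : conj x = -x) :
    conj (exp x) * exp y = exp (y - x) := by
  rw [← exp_conj, ← exp_add, hx, neg_add_eq_sub]

theorem exp_two_pi_I_mul_add_nat_mul_div (X : ℂ) (c : ℕ) {N : ℂ} (hN : N ≠ 0) :
    exp (2 * π * I * (X + c * N) / N) = exp (2 * π * I * X / N) := by
  rw [show 2 * π * I * (X + c * N) / N = 2 * π * I * X / N + c * (2 * π * I) by field_simp,
    exp_add, exp_nat_mul_two_pi_mul_I, mul_one]

theorem qft_phase_decomposition {R : Type*} [CommRing R] (j k l m a s b t M₁ M₂ N₁ N₂ : R)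
    (hk : k = M₁ * a + s) (hm : m = N₁ * b + t) (hN : N₁ * N₂ = M₁ * M₂) :
    (j * N₂ + k) * (l * M₂ + m) =
      N₂ * M₂ * j * l + M₂ * l * s + N₂ * j * t + k * m + (j * b + l * a) * (N₁ * N₂) := by
  subst hk hm
  linear_combination (-(l * a)) * hN

section QFT

variable {M₁ M₂ N₁ N₂ : ℕ}

theorem mem_QFTclass {s : Fin (min M₁ N₂)} {t : Fin (min N₁ M₂)} {xy : Fin N₂ × Fin M₂} :
    xy ∈ QFTclass M₁ M₂ N₁ N₂ s t ↔ xy.1.val % M₁ = s ∧ xy.2.val % N₁ = t := by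
  simp [QFTclass]

theorem eq_of_mem_QFTclass {s s' : Fin (min M₁ N₂)} {t t' : Fin (min N₁ M₂)}
    {xy : Fin N₂ × Fin M₂} (h : xy ∈ QFTclass M₁ M₂ N₁ N₂ s t)
    (h' : xy ∈ QFTclass M₁ M₂ N₁ N₂ s' t') : (s, t) = (s', t') := by
  rw [mem_QFTclass] at h h'
  exact Prod.ext (Fin.ext (h.1.symm.trans h'.1)) (Fin.ext (h.2.symm.trans h'.2))

theorem QFTclass_nonempty (s : Fin (min M₁ N₂)) (t : Fin (min N₁ M₂)) :
    (QFTclass M₁ M₂ N₁ N₂ s t).Nonempty :=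
  ⟨(Fin.castLE (min_le_right _ _) s, Fin.castLE (min_le_right _ _) t),
    mem_QFTclass.2 ⟨Nat.mod_eq_of_lt (s.2.trans_le (min_le_left _ _)),
      Nat.mod_eq_of_lt (t.2.trans_le (min_le_left _ _))⟩⟩

theorem star_QFTA_mul_QFTA (hN : N₁ * N₂ = M₁ * M₂)
    (s s' : Fin (min M₁ N₂)) (t t' : Fin (min N₁ M₂)) (j : Fin N₁) (l : Fin M₁) :
    star (QFTA M₁ M₂ N₁ N₂ s t j l) * QFTA M₁ M₂ N₁ N₂ s' t' j l =
      exp (2 * π * I * (j * ((t' : ℂ) - t)) / N₁) *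
        exp (2 * π * I * (l * ((s' : ℂ) - s)) / M₁) / (N₁ * M₁) := by
  have hNC : (N₁ : ℂ) * N₂ = M₁ * M₂ := by exact_mod_cast hN
  have hN₁ : (N₁ : ℂ) ≠ 0 := Nat.cast_ne_zero.2 j.pos.ne'
  have hM₁ : (M₁ : ℂ) ≠ 0 := Nat.cast_ne_zero.2 l.pos.ne'
  have hN₂ : (N₂ : ℂ) ≠ 0 := Nat.cast_ne_zero.2 (lt_min_iff.1 s.pos).2.ne'
  have hM₂ : (M₂ : ℂ) ≠ 0 := Nat.cast_ne_zero.2 (lt_min_iff.1 t.pos).2.ne'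
  rw [Complex.star_def]
  unfold QFTA
  rw [map_div₀, conj_ofReal, div_mul_div_comm, conj_exp_mul_exp (by
      simp only [map_div₀, map_mul, map_add, conj_ofReal, conj_I, map_natCast, map_ofNat]; ring),
    ← ofReal_mul, Real.mul_self_sqrt (by positivity), ← exp_add]
  push_cast
  congr 2
  field_simp
  linear_combination -((l : ℂ) * ((s' : ℂ) - s)) * hNC

theorem QFTA_orthonormal (hN : N₁ * N₂ = M₁ * M₂) (p q : Fin (min M₁ N₂) × Fin (min N₁ M₂)) :
    ((QFTA M₁ M₂ N₁ N₂ p.1 p.2)ᴴ * QFTA M₁ M₂ N₁ N₂ q.1 q.2).trace =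
      if p = q then 1 else 0 := by
  obtain ⟨s, t⟩ := p
  obtain ⟨s', t'⟩ := q
  have hs := lt_min_iff.1 s.2
  have ht := lt_min_iff.1 t.2
  have hNM : (N₁ : ℂ) * M₁ ≠ 0 := by
    norm_cast
    exact Nat.mul_ne_zero (Nat.zero_lt_of_lt ht.1).ne' (Nat.zero_lt_of_lt hs.1).ne'
  simp_rw [trace_conjTranspose_mul_eq_sum, star_QFTA_mul_QFTA hN, ← Finset.sum_div,
    ← Finset.mul_sum, ← Finset.sum_mul,
    sum_exp_two_pi_I_mul_sub_div_eq_ite ht.1 (lt_min_iff.1 t'.2).1,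
    sum_exp_two_pi_I_mul_sub_div_eq_ite hs.1 (lt_min_iff.1 s'.2).1, Prod.ext_iff, Fin.val_inj]
  split_ifs <;> simp_all

theorem QFTB_apply_of_notMem {s : Fin (min M₁ N₂)} {t : Fin (min N₁ M₂)} {x : Fin N₂}
    {y : Fin M₂} (h : (x, y) ∉ QFTclass M₁ M₂ N₁ N₂ s t) : QFTB M₁ M₂ N₁ N₂ s t x y = 0 :=
  if_neg h

theorem star_QFTB_mul_QFTB_self (s : Fin (min M₁ N₂)) (t : Fin (min N₁ M₂))
    (x : Fin N₂) (y : Fin M₂) :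
    star (QFTB M₁ M₂ N₁ N₂ s t x y) * QFTB M₁ M₂ N₁ N₂ s t x y =
      if (x, y) ∈ QFTclass M₁ M₂ N₁ N₂ s t then ((QFTclass M₁ M₂ N₁ N₂ s t).card : ℂ)⁻¹
      else 0 := by
  rw [Complex.star_def]
  unfold QFTB
  split_ifs
  · rw [map_div₀, conj_ofReal, div_mul_div_comm, conj_exp_mul_exp (by
        simp only [map_div₀, map_mul, conj_ofReal, conj_I, map_natCast, map_ofNat]; ring),
      sub_self, exp_zero, ← ofReal_mul, Real.mul_self_sqrt (Nat.cast_nonneg _), one_div,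
      ofReal_natCast]
  · rw [mul_zero]

theorem QFTB_orthonormal (p q : Fin (min M₁ N₂) × Fin (min N₁ M₂)) :
    ((QFTB M₁ M₂ N₁ N₂ p.1 p.2)ᴴ * QFTB M₁ M₂ N₁ N₂ q.1 q.2).trace =
      if p = q then 1 else 0 := by
  rw [trace_conjTranspose_mul_eq_sum]
  split_ifs with hpq
  · subst hpq
    simp_rw [star_QFTB_mul_QFTB_self]
    rw [← Fintype.sum_prod_type' (f := fun x y => if (x, y) ∈ QFTclass M₁ M₂ N₁ N₂ p.1 p.2
      then ((QFTclass M₁ M₂ N₁ N₂ p.1 p.2).card : ℂ)⁻¹ else 0), Finset.sum_ite_mem,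
      Finset.univ_inter, Finset.sum_const, nsmul_eq_mul]
    exact mul_inv_cancel₀ (Nat.cast_ne_zero.2 (QFTclass_nonempty _ _).card_pos.ne')
  · refine Finset.sum_eq_zero fun x _ => Finset.sum_eq_zero fun y _ => ?_
    by_cases h : (x, y) ∈ QFTclass M₁ M₂ N₁ N₂ p.1 p.2
    · rw [QFTB_apply_of_notMem fun h' => hpq (eq_of_mem_QFTclass h h'), mul_zero]
    · rw [QFTB_apply_of_notMem h, star_zero, zero_mul]

theorem QFT_apply_eq_of_mem (hN : N₁ * N₂ = M₁ * M₂) (j : Fin N₁) (k : Fin N₂) (l : Fin M₁)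
    (m : Fin M₂) {s : Fin (min M₁ N₂)} {t : Fin (min N₁ M₂)}
    (h : (k, m) ∈ QFTclass M₁ M₂ N₁ N₂ s t) :
    QFT M₁ M₂ N₁ N₂ (j, k) (l, m) =
      QFTlam M₁ M₂ N₁ N₂ s t * QFTA M₁ M₂ N₁ N₂ s t j l * QFTB M₁ M₂ N₁ N₂ s t k m := by
  obtain ⟨hs, ht⟩ := mem_QFTclass.1 h
  have hphase : ((j : ℂ) * N₂ + k) * (l * M₂ + m) =
      N₂ * M₂ * j * l + M₂ * l * s + N₂ * j * t + k * m +
        ((j * (m / N₁) + l * (k / M₁) : ℕ) : ℂ) * (N₁ * N₂) := by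
    have hNC : (N₁ : ℂ) * N₂ = M₁ * M₂ := by exact_mod_cast hN
    push_cast
    refine qft_phase_decomposition _ _ _ _ _ _ _ _ _ _ _ _ ?_ ?_ hNC
    · rw [← hs]; exact_mod_cast (Nat.div_add_mod k M₁).symm
    · rw [← ht]; exact_mod_cast (Nat.div_add_mod m N₁).symm
  have hc : (0 : ℝ) < (QFTclass M₁ M₂ N₁ N₂ s t).card := by
    exact_mod_cast Finset.card_pos.2 ⟨_, h⟩
  have hNM : (0 : ℝ) < N₁ * M₁ := by have := j.pos; have := l.pos; positivity
  have hNN : (0 : ℝ) < N₁ * N₂ := by have := j.pos; have := k.pos; positivity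
  have hlam : QFTlam M₁ M₂ N₁ N₂ s t =
      √(N₁ * M₁) * √(QFTclass M₁ M₂ N₁ N₂ s t).card / √(N₁ * N₂) := by
    rw [QFTlam, Real.sqrt_div' _ hNN.le, Real.sqrt_mul hNM.le]
  unfold QFT QFTA QFTB
  rw [if_pos h, hphase, exp_two_pi_I_mul_add_nat_mul_div _ _ (by exact_mod_cast hNN.ne'),
    mul_add, add_div, exp_add, hlam]
  have hc' := ofReal_ne_zero.2 (Real.sqrt_pos.2 hc).ne'
  have hNM' := ofReal_ne_zero.2 (Real.sqrt_pos.2 hNM).ne'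
  have hNN' := ofReal_ne_zero.2 (Real.sqrt_pos.2 hNN).ne'
  push_cast
  field_simp

theorem QFT_apply_eq_sum (hN : N₁ * N₂ = M₁ * M₂) (j : Fin N₁) (k : Fin N₂) (l : Fin M₁)
    (m : Fin M₂) :
    QFT M₁ M₂ N₁ N₂ (j, k) (l, m) =
      ∑ s : Fin (min M₁ N₂), ∑ t : Fin (min N₁ M₂),
        (QFTlam M₁ M₂ N₁ N₂ s t : ℂ) * QFTA M₁ M₂ N₁ N₂ s t j l * QFTB M₁ M₂ N₁ N₂ s t k m := by
  let s₀ : Fin (min M₁ N₂) :=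
    ⟨k % M₁, lt_min (Nat.mod_lt _ l.pos) ((Nat.mod_le _ _).trans_lt k.2)⟩
  let t₀ : Fin (min N₁ M₂) :=
    ⟨m % N₁, lt_min (Nat.mod_lt _ j.pos) ((Nat.mod_le _ _).trans_lt m.2)⟩
  have h₀ : (k, m) ∈ QFTclass M₁ M₂ N₁ N₂ s₀ t₀ := mem_QFTclass.2 ⟨rfl, rfl⟩
  rw [QFT_apply_eq_of_mem hN j k l m h₀, ← Fintype.sum_prod_type',
    Fintype.sum_eq_single (s₀, t₀)]
  intro p hp
  rw [QFTB_apply_of_notMem fun h => hp (eq_of_mem_QFTclass h h₀), mul_zero]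

end QFT

theorem stmt_13_general (M₁ M₂ N₁ N₂ : ℕ) (hN : N₁ * N₂ = M₁ * M₂) :
    (∀ (s : Fin (min M₁ N₂)) (t : Fin (min N₁ M₂)),
        (QFTclass M₁ M₂ N₁ N₂ s t).Nonempty) ∧
    (∀ (j : Fin N₁) (k : Fin N₂) (l : Fin M₁) (m : Fin M₂),
        QFT M₁ M₂ N₁ N₂ (j, k) (l, m) =
          ∑ s : Fin (min M₁ N₂), ∑ t : Fin (min N₁ M₂),
            (QFTlam M₁ M₂ N₁ N₂ s t : ℂ) * QFTA M₁ M₂ N₁ N₂ s t j l *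
              QFTB M₁ M₂ N₁ N₂ s t k m) ∧
    (∀ p q : Fin (min M₁ N₂) × Fin (min N₁ M₂),
        ((QFTA M₁ M₂ N₁ N₂ p.1 p.2)ᴴ * QFTA M₁ M₂ N₁ N₂ q.1 q.2).trace =
          if p = q then 1 else 0) ∧
    (∀ p q : Fin (min M₁ N₂) × Fin (min N₁ M₂),
        ((QFTB M₁ M₂ N₁ N₂ p.1 p.2)ᴴ * QFTB M₁ M₂ N₁ N₂ q.1 q.2).trace =
          if p = q then 1 else 0) :=
  ⟨QFTclass_nonempty, QFT_apply_eq_sum hN, QFTA_orthonormal hN, QFTB_orthonormal⟩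

/-- Generalized operator-Schmidt decomposition of the quantum Fourier transform:
`F = Σ_{(s,t)} λ(s,t) A(s,t) ⊗ B(s,t)` with `{A(s,t)}` and `{B(s,t)}` orthonormal
families (and each class `C(s,t)` nonempty). -/
theorem stmt_13 (M₁ M₂ N₁ N₂ : ℕ) (hM₁ : 0 < M₁) (hM₂ : 0 < M₂) (hN₁ : 0 < N₁)
    (hN₂ : 0 < N₂) (hN : N₁ * N₂ = M₁ * M₂) :
    (∀ (s : Fin (min M₁ N₂)) (t : Fin (min N₁ M₂)),
        (QFTclass M₁ M₂ N₁ N₂ s t).Nonempty) ∧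
    (∀ (j : Fin N₁) (k : Fin N₂) (l : Fin M₁) (m : Fin M₂),
        QFT M₁ M₂ N₁ N₂ (j, k) (l, m) =
          ∑ s : Fin (min M₁ N₂), ∑ t : Fin (min N₁ M₂),
            (QFTlam M₁ M₂ N₁ N₂ s t : ℂ) * QFTA M₁ M₂ N₁ N₂ s t j l *
              QFTB M₁ M₂ N₁ N₂ s t k m) ∧
    (∀ p q : Fin (min M₁ N₂) × Fin (min N₁ M₂),
        ((QFTA M₁ M₂ N₁ N₂ p.1 p.2)ᴴ * QFTA M₁ M₂ N₁ N₂ q.1 q.2).trace =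
          if p = q then 1 else 0) ∧
    (∀ p q : Fin (min M₁ N₂) × Fin (min N₁ M₂),
        ((QFTB M₁ M₂ N₁ N₂ p.1 p.2)ᴴ * QFTB M₁ M₂ N₁ N₂ q.1 q.2).trace =
          if p = q then 1 else 0) :=
  stmt_13_general M₁ M₂ N₁ N₂ hN
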